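/- If x(t) ∈ 𝕋ⁿ is 𝕋₂-proper and widely factorizable with factors Ā(t), B̄(t) ∈ 𝕋^{4n×p}, then, writing x₂(t) = [xᵀ(t), xᴴ(t)]ᵀ, the augmented pseudo-autocorrelation is block diagonal: Γ_{x̄}(t,s) = diag(Γ_{x₂}(t,s), Γ_{x₂}(t,s)^ı) (the superscript ı denoting entrywise application of the ı-conjugation), and Γ_{x₂}(t,s) = A₂(t)B₂ᴴ(s) for t ≥ s and Γ_{x₂}(t,s) = B₂(t)A₂ᴴ(s) for t < s, where A₂(t) = [I₂ₙ, 0_{2n×2n}]Ā(t) and B₂(t) = [I₂ₙ, 0_{2n×2n}]B̄(t). -/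

import Mathlib

open MeasureTheory Matrix
open scoped Kronecker

noncomputable section

/-- The tessarine algebra `𝕋`: the 4-dimensional commutative real algebra with basis
`{1, ı, ȷ, κ}` and multiplication rules `ı² = κ² = −1`, `ȷ² = 1`, `ıȷ = κ`, `ȷκ = ı`, `κı = −ȷ`. -/
@[ext] structure Tess : Type where
  re  : ℝ
  imI : ℝ
  imJ : ℝ
  imK : ℝ

namespace Tess

instance : Zero Tess := ⟨⟨0,0,0,0⟩⟩
instance : One Tess := ⟨⟨1,0,0,0⟩⟩
instance : Add Tess := ⟨fun a b => ⟨a.re+b.re, a.imI+b.imI, a.imJ+b.imJ, a.imK+b.imK⟩⟩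
instance : Neg Tess := ⟨fun a => ⟨-a.re, -a.imI, -a.imJ, -a.imK⟩⟩
instance : Mul Tess := ⟨fun a b =>
  ⟨a.re*b.re - a.imI*b.imI + a.imJ*b.imJ - a.imK*b.imK,
   a.re*b.imI + a.imI*b.re + a.imJ*b.imK + a.imK*b.imJ,
   a.re*b.imJ + a.imJ*b.re - a.imI*b.imK - a.imK*b.imI,
   a.re*b.imK + a.imK*b.re + a.imI*b.imJ + a.imJ*b.imI⟩⟩

@[simp] lemma zero_re : (0 : Tess).re = 0 := rfl
@[simp] lemma zero_imI : (0 : Tess).imI = 0 := rfl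
@[simp] lemma zero_imJ : (0 : Tess).imJ = 0 := rfl
@[simp] lemma zero_imK : (0 : Tess).imK = 0 := rfl
@[simp] lemma one_re : (1 : Tess).re = 1 := rfl
@[simp] lemma one_imI : (1 : Tess).imI = 0 := rfl
@[simp] lemma one_imJ : (1 : Tess).imJ = 0 := rfl
@[simp] lemma one_imK : (1 : Tess).imK = 0 := rfl
@[simp] lemma add_re (a b : Tess) : (a+b).re = a.re+b.re := rfl
@[simp] lemma add_imI (a b : Tess) : (a+b).imI = a.imI+b.imI := rfl
@[simp] lemma add_imJ (a b : Tess) : (a+b).imJ = a.imJ+b.imJ := rfl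
@[simp] lemma add_imK (a b : Tess) : (a+b).imK = a.imK+b.imK := rfl
@[simp] lemma neg_re (a : Tess) : (-a).re = -a.re := rfl
@[simp] lemma neg_imI (a : Tess) : (-a).imI = -a.imI := rfl
@[simp] lemma neg_imJ (a : Tess) : (-a).imJ = -a.imJ := rfl
@[simp] lemma neg_imK (a : Tess) : (-a).imK = -a.imK := rfl
@[simp] lemma mul_re (a b : Tess) :
    (a*b).re = a.re*b.re - a.imI*b.imI + a.imJ*b.imJ - a.imK*b.imK := rfl
@[simp] lemma mul_imI (a b : Tess) :
    (a*b).imI = a.re*b.imI + a.imI*b.re + a.imJ*b.imK + a.imK*b.imJ := rfl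
@[simp] lemma mul_imJ (a b : Tess) :
    (a*b).imJ = a.re*b.imJ + a.imJ*b.re - a.imI*b.imK - a.imK*b.imI := rfl
@[simp] lemma mul_imK (a b : Tess) :
    (a*b).imK = a.re*b.imK + a.imK*b.re + a.imI*b.imJ + a.imJ*b.imI := rfl

instance : CommRing Tess where
  add := (· + ·)
  zero := 0
  neg := Neg.neg
  mul := (· * ·)
  one := 1
  add_assoc a b c := by ext <;> simp <;> ring
  zero_add a := by ext <;> simp
  add_zero a := by ext <;> simp
  add_comm a b := by ext <;> simp <;> ring
  left_distrib a b c := by ext <;> simp <;> ring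
  right_distrib a b c := by ext <;> simp <;> ring
  zero_mul a := by ext <;> simp
  mul_zero a := by ext <;> simp
  mul_assoc a b c := by ext <;> simp <;> ring
  one_mul a := by ext <;> simp
  mul_one a := by ext <;> simp
  mul_comm a b := by ext <;> simp <;> ring
  neg_add_cancel a := by ext <;> simp
  nsmul := nsmulRec
  zsmul := zsmulRec

end Tess
namespace Tess

/-- Tessarine conjugation `x* = x_r − ı x_ı + ȷ x_ȷ − κ x_κ`. -/
def conj (x : Tess) : Tess := ⟨x.re, -x.imI, x.imJ, -x.imK⟩
/-- Auxiliary conjugation `x^ı = x_r + ı x_ı − ȷ x_ȷ − κ x_κ`. -/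
def conjI (x : Tess) : Tess := ⟨x.re, x.imI, -x.imJ, -x.imK⟩
/-- Auxiliary conjugation `x^κ = x_r − ı x_ı − ȷ x_ȷ + κ x_κ`. -/
def conjK (x : Tess) : Tess := ⟨x.re, -x.imI, -x.imJ, x.imK⟩
/-- Embedding of the reals into the tessarines. -/
def ofReal (a : ℝ) : Tess := ⟨a, 0, 0, 0⟩
/-- The imaginary unit `ı`. -/
def unitI : Tess := ⟨0,1,0,0⟩
/-- The imaginary unit `ȷ`. -/
def unitJ : Tess := ⟨0,0,1,0⟩
/-- The imaginary unit `κ`. -/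
def unitK : Tess := ⟨0,0,0,1⟩
/-- The four real components of a tessarine, indexed by `ν ∈ {r, ı, ȷ, κ}` (as `Fin 4`). -/
def comp (ν : Fin 4) (x : Tess) : ℝ := ![x.re, x.imI, x.imJ, x.imK] ν
/-- The product `⋆` of two tessarines:
`a ⋆ b = a_r b_r + ı a_ı b_ı + ȷ a_ȷ b_ȷ + κ a_κ b_κ`. -/
def star4 (a b : Tess) : Tess := ⟨a.re*b.re, a.imI*b.imI, a.imJ*b.imJ, a.imK*b.imK⟩

instance : MeasurableSpace Tess :=
  MeasurableSpace.comap (fun x : Tess => (x.re, x.imI, x.imJ, x.imK)) inferInstance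

end Tess

/-- The conjugations `id, (·)*, (·)^ı, (·)^κ`, indexed by `Fin 4`. -/
def cnu : Fin 4 → Tess → Tess := ![id, Tess.conj, Tess.conjI, Tess.conjK]

/-- Hermitian (conjugate) transpose of a tessarine matrix: transpose composed with
entrywise tessarine conjugation. -/
def Matrix.hT {m n : Type*} (M : Matrix m n Tess) : Matrix n m Tess :=
  Matrix.of fun a b => Tess.conj (M b a)

/-- Componentwise `⋆` product of two tessarine vectors. -/
def vstar {n : ℕ} (x y : Fin n → Tess) : Fin n → Tess := fun j => Tess.star4 (x j) (y j)

/-- The augmented vector `x̄ = [xᵀ, xᴴ, x^ıᵀ, x^κᵀ]ᵀ ∈ 𝕋^{4n}` of `x ∈ 𝕋ⁿ`. -/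
def augv {n : ℕ} (x : Fin n → Tess) : Fin 4 × Fin n → Tess :=
  fun p => cnu p.1 (x p.2)

/-- The real vector `xʳ = [x_rᵀ, x_ıᵀ, x_ȷᵀ, x_κᵀ]ᵀ ∈ ℝ^{4n}` of `x ∈ 𝕋ⁿ`. -/
def realv {n : ℕ} (x : Fin n → Tess) : Fin 4 × Fin n → ℝ :=
  fun p => Tess.comp p.1 (x p.2)

/-- The `4 × 4` tessarine matrix `𝒜` with rows `(1, ı, ȷ, κ)`, `(1, −ı, ȷ, −κ)`,
`(1, ı, −ȷ, −κ)`, `(1, −ı, −ȷ, κ)`. -/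
def tessA : Matrix (Fin 4) (Fin 4) Tess :=
  !![1,  Tess.unitI,  Tess.unitJ,  Tess.unitK;
     1, -Tess.unitI,  Tess.unitJ, -Tess.unitK;
     1,  Tess.unitI, -Tess.unitJ, -Tess.unitK;
     1, -Tess.unitI, -Tess.unitJ,  Tess.unitK]

/-- The matrix `𝒥ₙ = (1/2) 𝒜 ⊗ Iₙ`. -/
def Jn (n : ℕ) : Matrix (Fin 4 × Fin n) (Fin 4 × Fin n) Tess :=
  Tess.ofReal (1/2) • (tessA ⊗ₖ (1 : Matrix (Fin n) (Fin n) Tess))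

/-- Componentwise expectation of a tessarine-valued random variable. -/
def texp {Ω : Type*} [MeasurableSpace Ω] (μ : Measure Ω) (f : Ω → Tess) : Tess :=
  ⟨∫ ω, (f ω).re ∂μ, ∫ ω, (f ω).imI ∂μ, ∫ ω, (f ω).imJ ∂μ, ∫ ω, (f ω).imK ∂μ⟩

/-- The pseudo-cross-correlation matrix `Γ_{xy} = E[x yᴴ]` of two tessarine random vectors. -/
def Gamma {Ω m m' : Type*} [MeasurableSpace Ω] (μ : Measure Ω)
    (x : Ω → m → Tess) (y : Ω → m' → Tess) : Matrix m m' Tess :=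
  Matrix.of fun a b => texp μ (fun ω => x ω a * Tess.conj (y ω b))

/-- Entrywise expectation of a random tessarine matrix. -/
def texpM {Ω m m' : Type*} [MeasurableSpace Ω] (μ : Measure Ω)
    (F : Ω → Matrix m m' Tess) : Matrix m m' Tess :=
  Matrix.of fun a b => texp μ (fun ω => F ω a b)

/-- A tessarine random vector has zero mean. -/
def ZeroMean {Ω m : Type*} [MeasurableSpace Ω] (μ : Measure Ω) (x : Ω → m → Tess) : Prop :=
  ∀ a, texp μ (fun ω => x ω a) = 0

/-- A tessarine random vector is second order: all its real components are in `L²`. -/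
def SecondOrder {Ω m : Type*} [MeasurableSpace Ω] (μ : Measure Ω) (x : Ω → m → Tess) : Prop :=
  ∀ a ν, MemLp (fun ω => Tess.comp ν (x ω a)) 2 μ

section Properness

variable {Ω T T' m m' : Type*} [MeasurableSpace Ω] (μ : Measure Ω)

/-- Vanishing of the pseudo-cross-correlations `Γ_{x y^ν}(t,s)`, `ν = *, ı, κ`
(cross `𝕋₁`-properness). -/
def CrossT1 (x : T → Ω → m → Tess) (y : T' → Ω → m' → Tess) : Prop :=
  ∀ t s, Gamma μ (x t) (fun ω => Tess.conj ∘ y s ω) = 0 ∧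
    Gamma μ (x t) (fun ω => Tess.conjI ∘ y s ω) = 0 ∧
    Gamma μ (x t) (fun ω => Tess.conjK ∘ y s ω) = 0

/-- Vanishing of the pseudo-cross-correlations `Γ_{x y^ν}(t,s)`, `ν = ı, κ`
(cross `𝕋₂`-properness). -/
def CrossT2 (x : T → Ω → m → Tess) (y : T' → Ω → m' → Tess) : Prop :=
  ∀ t s, Gamma μ (x t) (fun ω => Tess.conjI ∘ y s ω) = 0 ∧
    Gamma μ (x t) (fun ω => Tess.conjK ∘ y s ω) = 0

/-- A tessarine signal is `𝕋₁`-proper. -/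
def T1proper (x : T → Ω → m → Tess) : Prop := CrossT1 μ x x

/-- A tessarine signal is `𝕋₂`-proper. -/
def T2proper (x : T → Ω → m → Tess) : Prop := CrossT2 μ x x

/-- Two tessarine signals are jointly `𝕋₁`-proper. -/
def JointlyT1 (x : T → Ω → m → Tess) (y : T → Ω → m' → Tess) : Prop :=
  T1proper μ x ∧ T1proper μ y ∧ CrossT1 μ x y

/-- Two tessarine signals are jointly `𝕋₂`-proper. -/
def JointlyT2 (x : T → Ω → m → Tess) (y : T → Ω → m' → Tess) : Prop :=
  T2proper μ x ∧ T2proper μ y ∧ CrossT2 μ x y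

end Properness

/-- `est` is a linear MMSE estimator of `target` based on the observations
`obs 1, …, obs s`: it is a (tessarine-) linear combination of the observations and the
estimation error is orthogonal to each observation. -/
def IsLMMSE {Ω m m' : Type*} [MeasurableSpace Ω] [Fintype m'] (μ : Measure Ω)
    (target : Ω → m → Tess) (obs : ℕ → Ω → m' → Tess) (s : ℕ) (est : Ω → m → Tess) : Prop :=
  (∃ C : ℕ → Matrix m m' Tess, ∀ ω, est ω = ∑ j ∈ Finset.Icc 1 s, (C j).mulVec (obs j ω)) ∧
  ∀ j, 1 ≤ j → j ≤ s → Gamma μ (fun ω => target ω - est ω) (obs j) = 0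

/-- The `k`-lift of a tessarine vector: for `k = 1` the vector itself, for `k = 2`
the vector `[xᵀ, xᴴ]ᵀ`. -/
def klift {k n : ℕ} (x : Fin n → Tess) : Fin k × Fin n → Tess :=
  fun p => if p.1.val = 0 then x p.2 else Tess.conj (x p.2)

/-! The conjugations `id, (·)*, (·)^ı, (·)^κ` are ring automorphisms commuting with the
expectation, and under the indexing `cnu` by `Fin 4` they compose by bitwise xor (a Klein
four-group). Hence the `(ν, ν')` block of `Γ_{x̄}` is the `ν`-conjugate of `Γ_{x x^{ν ⊕ ν'}}`:
`𝕋₂`-properness kills exactly the blocks with `ν ⊕ ν' ∈ {ı, κ}`, which are the off-diagonal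
ones, and since `(·)^ı` maps `{x, xᴴ}` to `{x^ı, x^κ}` the lower diagonal block is the
`ı`-conjugate of the upper one. Finally `Γ_{x₂}` is the upper-left block of `Γ_{x̄} = ĀB̄ᴴ`
(resp. `B̄Āᴴ`), which is `A₂B₂ᴴ` (resp. `B₂A₂ᴴ`). -/

namespace Tess

lemma cnu_zero (ν : Fin 4) : cnu ν 0 = 0 := by
  fin_cases ν <;> ext <;> simp [cnu, conj, conjI, conjK]

lemma cnu_mul (ν : Fin 4) (a b : Tess) : cnu ν (a * b) = cnu ν a * cnu ν b := by
  fin_cases ν <;> ext <;> simp [cnu, conj, conjI, conjK] <;> ring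

lemma cnu_conj (ν : Fin 4) (a : Tess) : cnu ν (conj a) = conj (cnu ν a) := by
  fin_cases ν <;> ext <;> simp [cnu, conj, conjI, conjK]

lemma cnu_cnu (ν ν' : Fin 4) (a : Tess) : cnu ν (cnu ν' a) = cnu (ν ^^^ ν') a := by
  fin_cases ν <;> fin_cases ν' <;> ext <;> simp [cnu, conj, conjI, conjK]

end Tess

section Correlation

variable {Ω : Type*} [MeasurableSpace Ω] (μ : Measure Ω) {n m : ℕ}

lemma texp_cnu (ν : Fin 4) (f : Ω → Tess) :
    texp μ (fun ω => cnu ν (f ω)) = cnu ν (texp μ f) := by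
  fin_cases ν <;> ext <;> simp [texp, cnu, Tess.conj, Tess.conjI, Tess.conjK, integral_neg]

lemma Gamma_augv_apply (x : Ω → Fin n → Tess) (y : Ω → Fin m → Tess)
    (ν ν' : Fin 4) (a : Fin n) (b : Fin m) :
    Gamma μ (fun ω => augv (x ω)) (fun ω => augv (y ω)) (ν, a) (ν', b) =
      cnu ν (Gamma μ x (fun ω => cnu (ν ^^^ ν') ∘ y ω) a b) := by
  have hν : ν ^^^ (ν ^^^ ν') = ν' := by revert ν ν'; decide
  simp only [Gamma, of_apply, augv, Function.comp_apply, ← texp_cnu, Tess.cnu_mul,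
    Tess.cnu_conj, Tess.cnu_cnu, hν]

lemma Gamma_augv_xor_apply (x : Ω → Fin n → Tess) (y : Ω → Fin m → Tess)
    (σ ν ν' : Fin 4) (a : Fin n) (b : Fin m) :
    Gamma μ (fun ω => augv (x ω)) (fun ω => augv (y ω)) (σ ^^^ ν, a) (σ ^^^ ν', b) =
      cnu σ (Gamma μ (fun ω => augv (x ω)) (fun ω => augv (y ω)) (ν, a) (ν', b)) := by
  have hσ : (σ ^^^ ν) ^^^ (σ ^^^ ν') = ν ^^^ ν' := by revert σ ν ν'; decide
  rw [Gamma_augv_apply, Gamma_augv_apply, Tess.cnu_cnu, hσ]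

lemma Gamma_augv_apply_eq_zero (x : Ω → Fin n → Tess) (y : Ω → Fin m → Tess)
    (hI : Gamma μ x (fun ω => Tess.conjI ∘ y ω) = 0)
    (hK : Gamma μ x (fun ω => Tess.conjK ∘ y ω) = 0)
    {ν ν' : Fin 4} (h : 2 ≤ (ν ^^^ ν').val) (a : Fin n) (b : Fin m) :
    Gamma μ (fun ω => augv (x ω)) (fun ω => augv (y ω)) (ν, a) (ν', b) = 0 := by
  rw [Gamma_augv_apply]
  obtain h2 | h3 : ν ^^^ ν' = 2 ∨ ν ^^^ ν' = 3 := by omega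
  · rw [h2, show cnu 2 = Tess.conjI from rfl, hI, Matrix.zero_apply, Tess.cnu_zero]
  · rw [h3, show cnu 3 = Tess.conjK from rfl, hK, Matrix.zero_apply, Tess.cnu_zero]

lemma Gamma_klift_eq_submatrix (x : Ω → Fin n → Tess) (y : Ω → Fin m → Tess) :
    Gamma μ (fun ω => (klift (x ω) : Fin 2 × Fin n → Tess))
        (fun ω => (klift (y ω) : Fin 2 × Fin m → Tess)) =
      (Gamma μ (fun ω => augv (x ω)) (fun ω => augv (y ω))).submatrix
        (fun q : Fin 2 × Fin n => ((Fin.castLE (by decide) q.1 : Fin 4), q.2))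
        (fun q : Fin 2 × Fin m => ((Fin.castLE (by decide) q.1 : Fin 4), q.2)) := by
  refine Matrix.ext fun ⟨ν, a⟩ ⟨ν', b⟩ => ?_
  fin_cases ν <;> fin_cases ν' <;> rfl

lemma Gamma_augv_eq_blockDiag (x : Ω → Fin n → Tess) (y : Ω → Fin m → Tess)
    (hI : Gamma μ x (fun ω => Tess.conjI ∘ y ω) = 0)
    (hK : Gamma μ x (fun ω => Tess.conjK ∘ y ω) = 0) :
    Gamma μ (fun ω => augv (x ω)) (fun ω => augv (y ω)) =
      Matrix.of fun (q : Fin 4 × Fin n) (q' : Fin 4 × Fin m) =>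
        if h : q.1.val < 2 then
          (if h' : q'.1.val < 2 then
            Gamma μ (fun ω => (klift (x ω) : Fin 2 × Fin n → Tess))
              (fun ω => (klift (y ω) : Fin 2 × Fin m → Tess))
              (⟨q.1.val, h⟩, q.2) (⟨q'.1.val, h'⟩, q'.2)
          else 0)
        else
          (if h' : q'.1.val < 2 then 0 else
            Tess.conjI (Gamma μ (fun ω => (klift (x ω) : Fin 2 × Fin n → Tess))
              (fun ω => (klift (y ω) : Fin 2 × Fin m → Tess))
              (⟨q.1.val - 2, Nat.sub_lt_left_of_lt_add (Nat.le_of_not_lt h) q.1.isLt⟩, q.2)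
              (⟨q'.1.val - 2, Nat.sub_lt_left_of_lt_add (Nat.le_of_not_lt h') q'.1.isLt⟩,
                q'.2))) := by
  refine Matrix.ext fun ⟨ν, a⟩ ⟨ν', b⟩ => ?_
  have hxor : ∀ ν ν' : Fin 4, ν.val < 2 → 2 ≤ ν'.val →
      2 ≤ (ν ^^^ ν').val ∧ 2 ≤ (ν' ^^^ ν).val := by decide
  have hshift : ∀ ν : Fin 4, 2 ≤ ν.val → ν = 2 ^^^ ⟨ν.val - 2, by omega⟩ := by decide
  simp only [of_apply, Gamma_klift_eq_submatrix, submatrix_apply]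
  split_ifs with h h' h'
  · rfl
  · exact Gamma_augv_apply_eq_zero μ x y hI hK (hxor ν ν' h (by omega)).1 a b
  · exact Gamma_augv_apply_eq_zero μ x y hI hK (hxor ν' ν h' (by omega)).2 a b
  · conv_lhs => rw [hshift ν (by omega), hshift ν' (by omega), Gamma_augv_xor_apply]
    rfl

lemma Matrix.submatrix_mul_hT {k l l' m m' : Type*} [Fintype k]
    (A : Matrix m k Tess) (B : Matrix m' k Tess) (e : l → m) (f : l' → m') :
    (A * B.hT).submatrix e f = A.submatrix e id * (B.submatrix f id).hT :=
  Matrix.submatrix_mul A B.hT e id f Function.bijective_id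

lemma Gamma_klift_eq_mul_hT (x : Ω → Fin n → Tess) (y : Ω → Fin m → Tess)
    {k : Type*} [Fintype k] (A : Matrix (Fin 4 × Fin n) k Tess)
    (B : Matrix (Fin 4 × Fin m) k Tess)
    (h : Gamma μ (fun ω => augv (x ω)) (fun ω => augv (y ω)) = A * B.hT) :
    Gamma μ (fun ω => (klift (x ω) : Fin 2 × Fin n → Tess))
        (fun ω => (klift (y ω) : Fin 2 × Fin m → Tess)) =
      A.submatrix (fun q : Fin 2 × Fin n => ((Fin.castLE (by decide) q.1 : Fin 4), q.2)) id *
        (B.submatrix (fun q : Fin 2 × Fin m => ((Fin.castLE (by decide) q.1 : Fin 4), q.2))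
          id).hT := by
  rw [Gamma_klift_eq_submatrix, h, Matrix.submatrix_mul_hT]

end Correlation

/-- If `x(t) ∈ 𝕋ⁿ` is `𝕋₂`-proper and widely factorizable with factors
`Ā(t), B̄(t) ∈ 𝕋^{4n×p}`, then, with `x₂(t) = [xᵀ(t), xᴴ(t)]ᵀ`,
`Γ_{x̄}(t,s) = diag(Γ_{x₂}(t,s), Γ_{x₂}(t,s)^ı)` and `Γ_{x₂}(t,s) = A₂(t)B₂ᴴ(s)` for
`t ≥ s`, `Γ_{x₂}(t,s) = B₂(t)A₂ᴴ(s)` for `t < s`, where `A₂(t) = [I₂ₙ, 0]Ā(t)` and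
`B₂(t) = [I₂ₙ, 0]B̄(t)`. -/
theorem T2proper_widely_factorizable {Ω : Type} [MeasurableSpace Ω]
    (μ : MeasureTheory.Measure Ω) {n p : ℕ}
    (x : ℤ → Ω → Fin n → Tess)
    (Abar Bbar : ℤ → Matrix (Fin 4 × Fin n) (Fin p) Tess)
    (hfac : ∀ t s : ℤ,
      (s ≤ t → Gamma μ (fun ω => augv (x t ω)) (fun ω => augv (x s ω)) =
        Abar t * (Bbar s).hT) ∧
      (t < s → Gamma μ (fun ω => augv (x t ω)) (fun ω => augv (x s ω)) =
        Bbar t * (Abar s).hT))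
    (hproper : T2proper μ x) :
    (∀ t s : ℤ, Gamma μ (fun ω => augv (x t ω)) (fun ω => augv (x s ω)) =
      Matrix.of fun q q' : Fin 4 × Fin n =>
        if h : q.1.val < 2 then
          (if h' : q'.1.val < 2 then
            Gamma μ (fun ω => (klift (x t ω) : Fin 2 × Fin n → Tess))
              (fun ω => (klift (x s ω) : Fin 2 × Fin n → Tess))
              (⟨q.1.val, h⟩, q.2) (⟨q'.1.val, h'⟩, q'.2)
          else 0)
        else
          (if h' : q'.1.val < 2 then 0 else
            Tess.conjI (Gamma μ (fun ω => (klift (x t ω) : Fin 2 × Fin n → Tess))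
              (fun ω => (klift (x s ω) : Fin 2 × Fin n → Tess))
              (⟨q.1.val - 2, by have := q.1.isLt; omega⟩, q.2)
              (⟨q'.1.val - 2, by have := q'.1.isLt; omega⟩, q'.2)))) ∧
    (∀ t s : ℤ,
      (s ≤ t → Gamma μ (fun ω => (klift (x t ω) : Fin 2 × Fin n → Tess))
          (fun ω => (klift (x s ω) : Fin 2 × Fin n → Tess)) =
        (Abar t).submatrix
            (fun q : Fin 2 × Fin n => ((Fin.castLE (by norm_num) q.1 : Fin 4), q.2)) id *
          ((Bbar s).submatrix
            (fun q : Fin 2 × Fin n => ((Fin.castLE (by norm_num) q.1 : Fin 4), q.2)) id).hT) ∧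
      (t < s → Gamma μ (fun ω => (klift (x t ω) : Fin 2 × Fin n → Tess))
          (fun ω => (klift (x s ω) : Fin 2 × Fin n → Tess)) =
        (Bbar t).submatrix
            (fun q : Fin 2 × Fin n => ((Fin.castLE (by norm_num) q.1 : Fin 4), q.2)) id *
          ((Abar s).submatrix
            (fun q : Fin 2 × Fin n => ((Fin.castLE (by norm_num) q.1 : Fin 4), q.2)) id).hT)) :=
  ⟨fun t s => Gamma_augv_eq_blockDiag μ (x t) (x s) (hproper t s).1 (hproper t s).2,
    fun t s => ⟨fun hst => Gamma_klift_eq_mul_hT μ (x t) (x s) _ _ ((hfac t s).1 hst),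
      fun hts => Gamma_klift_eq_mul_hT μ (x t) (x s) _ _ ((hfac t s).2 hts)⟩⟩
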